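/- Let p > 1, let N ≥ 2 be an integer, let α ∈ ℝ and let ω > α²/N². Define φ : [0,∞) → ℝ by φ(x) = (((p+1)ω/2)·sech²(((p−1)√ω/2)·x − arctanh(α/(N√ω))))^{1/(p−1)}. Then the Nehari identity holds: N·(∫₀^∞ φ'(x)² dx + ω·∫₀^∞ φ(x)² dx − ∫₀^∞ φ(x)^{p+1} dx) + α·φ(0)² = 0. -/

import Mathlib

open MeasureTheory Real Set Filter Topology

/-!
With `y = (p - 1)√ω/2 · x - b`, the profile satisfies `φ' = -√ω tanh y · φ` and
`φ^(p-1) = (p+1)ω/2 · sech² y`; together with `tanh² = 1 - sech²` this gives the stationary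
equation `φ'' = ωφ - φ^p`. Multiplying by `φ` and integrating by parts over `(0, ∞)`, where `φ`
decays like `e^(-√ω x)`, yields `∫ φ'² + ω ∫ φ² - ∫ φ^(p+1) = -φ(0) φ'(0)`. The shift
`b = arctanh (α / (N√ω))` is exactly the δ-vertex condition `φ'(0) = (α/N) φ(0)`, so the boundary
term is `-(α/N) φ(0)²`.
-/

/-- Inverse hyperbolic tangent. -/
noncomputable def arctanh (x : ℝ) : ℝ := Real.log ((1 + x) / (1 - x)) / 2

theorem tanh_arctanh {t : ℝ} (ht : t ∈ Ioo (-1) 1) : tanh (arctanh t) = t := by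
  rw [arctanh, ← one_div_mul_eq_div, ← artanh_eq_half_log (Ioo_subset_Icc_self ht),
    tanh_artanh ht]

theorem hasDerivAt_tanh (x : ℝ) : HasDerivAt tanh (1 / cosh x ^ 2) x := by
  rw [show tanh = fun y => sinh y / cosh y from funext tanh_eq_sinh_div_cosh]
  refine ((hasDerivAt_sinh x).div (hasDerivAt_cosh x) (cosh_pos x).ne').congr_deriv ?_
  rw [← cosh_sq_sub_sinh_sq x]
  ring

theorem one_div_cosh_le_two_mul_exp_neg (x : ℝ) : 1 / cosh x ≤ 2 * exp (-x) := by
  rw [div_le_iff₀ (cosh_pos x), cosh_eq, exp_neg]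
  field_simp
  nlinarith [exp_pos x]

theorem integral_Ioi_deriv_sq_add_mul_eq {f f' f'' : ℝ → ℝ} {a : ℝ}
    (hf : ∀ x ∈ Ici a, HasDerivAt f (f' x) x) (hf' : ∀ x ∈ Ici a, HasDerivAt f' (f'' x) x)
    (hint : IntegrableOn (fun x => f' x ^ 2 + f x * f'' x) (Ioi a))
    (hlim : Tendsto (fun x => f x * f' x) atTop (𝓝 0)) :
    ∫ x in Ioi a, (f' x ^ 2 + f x * f'' x) = -(f a * f' a) := by
  rw [integral_Ioi_of_hasDerivAt_of_tendsto' (fun x hx => ?_) hint hlim, zero_sub]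
  exact ((hf x hx).mul (hf' x hx)).congr_deriv (by ring)

noncomputable def solitonProfile (p ω b x : ℝ) : ℝ :=
  ((p + 1) * ω / 2 * (1 / cosh ((p - 1) * √ω / 2 * x - b)) ^ 2) ^ (1 / (p - 1))

noncomputable def solitonProfileDeriv (p ω b x : ℝ) : ℝ :=
  -(√ω * tanh ((p - 1) * √ω / 2 * x - b) * solitonProfile p ω b x)

section SolitonProfile

variable {p ω b : ℝ}

theorem solitonProfile_pos (hp : -1 < p) (hω : 0 < ω) (x : ℝ) :
    0 < solitonProfile p ω b x := by
  have := cosh_pos ((p - 1) * √ω / 2 * x - b)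
  have : 0 < p + 1 := by linarith
  unfold solitonProfile
  positivity

theorem solitonProfile_rpow_sub_one (hp : 1 < p) (hω : 0 ≤ ω) (x : ℝ) :
    solitonProfile p ω b x ^ (p - 1)
      = (p + 1) * ω / 2 * (1 / cosh ((p - 1) * √ω / 2 * x - b)) ^ 2 := by
  have : 0 < p + 1 := by linarith
  rw [solitonProfile, ← rpow_mul (by positivity), one_div_mul_cancel (by linarith), rpow_one]

theorem hasDerivAt_solitonProfile (hp : 1 < p) (hω : 0 < ω) (x : ℝ) :
    HasDerivAt (solitonProfile p ω b) (solitonProfileDeriv p ω b x) x := by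
  have hy : HasDerivAt (fun x => (p - 1) * √ω / 2 * x - b) ((p - 1) * √ω / 2) x := by
    simpa using ((hasDerivAt_id x).const_mul ((p - 1) * √ω / 2)).sub_const b
  have hcosh := cosh_pos ((p - 1) * √ω / 2 * x - b)
  have hsech := (hasDerivAt_const x (1 : ℝ)).div ((hasDerivAt_cosh _).comp x hy) hcosh.ne'
  have hg := (hsech.pow 2).const_mul ((p + 1) * ω / 2)
  have hg0 : 0 < (p + 1) * ω / 2 * (1 / cosh ((p - 1) * √ω / 2 * x - b)) ^ 2 := by
    have : 0 < p + 1 := by linarith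
    positivity
  refine (hg.rpow_const (p := 1 / (p - 1)) (Or.inl hg0.ne')).congr_deriv ?_
  simp only [Pi.div_apply, Function.comp_apply, Pi.pow_apply]
  rw [rpow_sub_one hg0.ne', solitonProfileDeriv, solitonProfile, tanh_eq_sinh_div_cosh]
  generalize (p - 1) * √ω / 2 * x - b = y at hcosh ⊢
  have : p - 1 ≠ 0 := by linarith
  norm_num
  field_simp

theorem continuous_solitonProfile (hp : 1 < p) (hω : 0 < ω) :
    Continuous (solitonProfile p ω b) :=
  continuous_iff_continuousAt.2 fun x => (hasDerivAt_solitonProfile hp hω x).continuousAt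

theorem hasDerivAt_solitonProfileDeriv (hp : 1 < p) (hω : 0 < ω) (x : ℝ) :
    HasDerivAt (solitonProfileDeriv p ω b)
      (ω * solitonProfile p ω b x - solitonProfile p ω b x ^ p) x := by
  have hy : HasDerivAt (fun x => (p - 1) * √ω / 2 * x - b) ((p - 1) * √ω / 2) x := by
    simpa using ((hasDerivAt_id x).const_mul ((p - 1) * √ω / 2)).sub_const b
  have htanh := (hasDerivAt_tanh _).comp x hy
  refine (((htanh.const_mul √ω).mul (hasDerivAt_solitonProfile hp hω x)).neg).congr_deriv ?_
  have hpow : solitonProfile p ω b x ^ p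
      = solitonProfile p ω b x ^ (p - 1) * solitonProfile p ω b x := by
    rw [rpow_sub_one (solitonProfile_pos (by linarith : -1 < p) hω x).ne',
      div_mul_cancel₀ _ (solitonProfile_pos (by linarith : -1 < p) hω x).ne']
  simp only [Function.comp_apply]
  rw [hpow, solitonProfile_rpow_sub_one hp hω.le, solitonProfileDeriv, tanh_eq_sinh_div_cosh]
  have hcosh := cosh_pos ((p - 1) * √ω / 2 * x - b)
  have hsq := mul_self_sqrt hω.le
  generalize solitonProfile p ω b x = u
  generalize (p - 1) * √ω / 2 * x - b = y at hcosh ⊢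
  field_simp
  linear_combination (u * (1 - p) + 2 * u * sinh y ^ 2) * hsq - 2 * ω * u * cosh_sq y

theorem continuous_solitonProfileDeriv (hp : 1 < p) (hω : 0 < ω) :
    Continuous (solitonProfileDeriv p ω b) :=
  continuous_iff_continuousAt.2 fun x => (hasDerivAt_solitonProfileDeriv hp hω x).continuousAt

theorem abs_solitonProfileDeriv_le (hp : -1 < p) (hω : 0 < ω) (x : ℝ) :
    |solitonProfileDeriv p ω b x| ≤ √ω * solitonProfile p ω b x := by
  have hpos := solitonProfile_pos (b := b) hp hω x
  rw [solitonProfileDeriv, abs_neg, abs_mul, abs_mul, abs_of_nonneg (sqrt_nonneg ω),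
    abs_of_pos hpos]
  gcongr
  exact mul_le_of_le_one_right (sqrt_nonneg ω) (abs_tanh_lt_one _).le

theorem solitonProfile_le_mul_exp (hp : 1 < p) (hω : 0 ≤ ω) :
    ∃ K, ∀ x, solitonProfile p ω b x ≤ K * exp (-√ω * x) := by
  refine ⟨(2 * (p + 1) * ω * exp (2 * b)) ^ (1 / (p - 1)), fun x => ?_⟩
  calc solitonProfile p ω b x
      ≤ ((p + 1) * ω / 2 * (2 * exp (-((p - 1) * √ω / 2 * x - b))) ^ 2) ^ (1 / (p - 1)) := by
        unfold solitonProfile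
        have := cosh_pos ((p - 1) * √ω / 2 * x - b)
        gcongr
        exact one_div_cosh_le_two_mul_exp_neg _
    _ = (2 * (p + 1) * ω * exp (2 * b) * exp (-√ω * x) ^ (p - 1)) ^ (1 / (p - 1)) := by
        rw [← exp_mul, mul_pow, sq (exp _), ← exp_add, mul_assoc _ (exp _), ← exp_add]
        ring_nf
    _ = (2 * (p + 1) * ω * exp (2 * b)) ^ (1 / (p - 1)) * exp (-√ω * x) := by
        rw [mul_rpow (by positivity) (by positivity), ← rpow_mul (exp_pos _).le,
          mul_one_div_cancel (by linarith), rpow_one]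

theorem integrableOn_solitonProfile_sq (hp : 1 < p) (hω : 0 < ω) (s : ℝ) :
    IntegrableOn (fun x => solitonProfile p ω b x ^ 2) (Ioi s) := by
  obtain ⟨K, hK⟩ := solitonProfile_le_mul_exp (b := b) hp hω.le
  refine ((exp_neg_integrableOn_Ioi s (by positivity : 0 < 2 * √ω)).const_mul (K ^ 2)).mono'
    ((continuous_solitonProfile hp hω).pow 2).aestronglyMeasurable (ae_of_all _ fun x => ?_)
  have hpos := solitonProfile_pos (b := b) (by linarith : -1 < p) hω x
  calc ‖solitonProfile p ω b x ^ 2‖ = solitonProfile p ω b x ^ 2 := by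
        rw [norm_pow, norm_of_nonneg hpos.le]
    _ ≤ (K * exp (-√ω * x)) ^ 2 := pow_le_pow_left₀ hpos.le (hK x) 2
    _ = K ^ 2 * exp (-(2 * √ω) * x) := by rw [mul_pow, ← exp_nat_mul]; ring_nf

theorem integrableOn_solitonProfileDeriv_sq (hp : 1 < p) (hω : 0 < ω) (s : ℝ) :
    IntegrableOn (fun x => solitonProfileDeriv p ω b x ^ 2) (Ioi s) := by
  refine ((integrableOn_solitonProfile_sq (b := b) hp hω s).const_mul ω).mono'
    ((continuous_solitonProfileDeriv hp hω).pow 2).aestronglyMeasurable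
    (ae_of_all _ fun x => ?_)
  calc ‖solitonProfileDeriv p ω b x ^ 2‖ = |solitonProfileDeriv p ω b x| ^ 2 := by
        rw [norm_pow, norm_eq_abs]
    _ ≤ (√ω * solitonProfile p ω b x) ^ 2 :=
        pow_le_pow_left₀ (abs_nonneg _) (abs_solitonProfileDeriv_le (by linarith : -1 < p) hω x) 2
    _ = ω * solitonProfile p ω b x ^ 2 := by rw [mul_pow, sq_sqrt hω.le]

theorem solitonProfile_rpow_add_one_le (hp : 1 < p) (hω : 0 < ω) (x : ℝ) :
    solitonProfile p ω b x ^ (p + 1) ≤ (p + 1) * ω / 2 * solitonProfile p ω b x ^ 2 := by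
  have hpos := solitonProfile_pos (b := b) (by linarith : -1 < p) hω x
  have hsech : 1 / cosh ((p - 1) * √ω / 2 * x - b) ≤ 1 :=
    (div_le_one (cosh_pos _)).2 (one_le_cosh _)
  rw [show solitonProfile p ω b x ^ (p + 1)
      = solitonProfile p ω b x ^ (p - 1) * solitonProfile p ω b x ^ 2 by
    rw [← rpow_two, ← rpow_add hpos]; ring_nf, solitonProfile_rpow_sub_one hp hω.le]
  have : 0 < p + 1 := by linarith
  gcongr
  exact mul_le_of_le_one_right (by positivity) (pow_le_one₀ (by positivity) hsech)

theorem integrableOn_solitonProfile_rpow_add_one (hp : 1 < p) (hω : 0 < ω) (s : ℝ) :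
    IntegrableOn (fun x => solitonProfile p ω b x ^ (p + 1)) (Ioi s) := by
  refine ((integrableOn_solitonProfile_sq (b := b) hp hω s).const_mul ((p + 1) * ω / 2)).mono'
    ((continuous_solitonProfile hp hω).rpow_const fun _ => Or.inr (by linarith)).aestronglyMeasurable
    (ae_of_all _ fun x => ?_)
  rw [norm_of_nonneg (rpow_nonneg (solitonProfile_pos (by linarith : -1 < p) hω x).le _)]
  exact solitonProfile_rpow_add_one_le hp hω x

theorem tendsto_solitonProfile_atTop (hp : 1 < p) (hω : 0 < ω) :
    Tendsto (solitonProfile p ω b) atTop (𝓝 0) := by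
  obtain ⟨K, hK⟩ := solitonProfile_le_mul_exp (b := b) hp hω.le
  have hexp : Tendsto (fun x => K * exp (-√ω * x)) atTop (𝓝 0) := by
    simpa using (tendsto_exp_atBot.comp
      (tendsto_id.const_mul_atTop_of_neg (neg_lt_zero.2 (sqrt_pos.2 hω)))).const_mul K
  exact squeeze_zero (fun x => (solitonProfile_pos (by linarith : -1 < p) hω x).le) hK hexp

theorem tendsto_solitonProfile_mul_deriv_atTop (hp : 1 < p) (hω : 0 < ω) :
    Tendsto (fun x => solitonProfile p ω b x * solitonProfileDeriv p ω b x) atTop (𝓝 0) := by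
  have hφ := tendsto_solitonProfile_atTop (b := b) hp hω
  have hφ' : Tendsto (solitonProfileDeriv p ω b) atTop (𝓝 0) := by
    refine squeeze_zero_norm (abs_solitonProfileDeriv_le (by linarith : -1 < p) hω) ?_
    simpa using hφ.const_mul √ω
  simpa using hφ.mul hφ'

theorem solitonProfile_nehari (hp : 1 < p) (hω : 0 < ω) (s : ℝ) :
    (∫ x in Ioi s, solitonProfileDeriv p ω b x ^ 2)
        + ω * (∫ x in Ioi s, solitonProfile p ω b x ^ 2)
        - ∫ x in Ioi s, solitonProfile p ω b x ^ (p + 1)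
      = -(solitonProfile p ω b s * solitonProfileDeriv p ω b s) := by
  set φ := solitonProfile p ω b
  set φ' := solitonProfileDeriv p ω b
  have h1 : IntegrableOn (fun x => φ' x ^ 2) (Ioi s) := integrableOn_solitonProfileDeriv_sq hp hω s
  have h2 : IntegrableOn (fun x => ω * φ x ^ 2) (Ioi s) :=
    (integrableOn_solitonProfile_sq hp hω s).const_mul ω
  have h12 : IntegrableOn (fun x => φ' x ^ 2 + ω * φ x ^ 2) (Ioi s) := h1.add h2
  have h3 : IntegrableOn (fun x => φ x ^ (p + 1)) (Ioi s) :=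
    integrableOn_solitonProfile_rpow_add_one hp hω s
  have hmul : ∀ x, φ' x ^ 2 + φ x * (ω * φ x - φ x ^ p) = φ' x ^ 2 + ω * φ x ^ 2 - φ x ^ (p + 1) :=
    fun x => by
      rw [rpow_add_one (solitonProfile_pos (by linarith : -1 < p) hω x).ne']
      ring
  have hIBP := integral_Ioi_deriv_sq_add_mul_eq (f := φ) (f' := φ')
    (f'' := fun x => ω * φ x - φ x ^ p) (a := s)
    (fun x _ => hasDerivAt_solitonProfile hp hω x)
    (fun x _ => hasDerivAt_solitonProfileDeriv hp hω x)
    (by simp_rw [hmul]; exact h12.sub h3) (tendsto_solitonProfile_mul_deriv_atTop hp hω)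
  simp_rw [hmul] at hIBP
  rwa [integral_sub h12 h3, integral_add h1 h2, integral_const_mul] at hIBP

end SolitonProfile

/-- The ground-state profile of the NLS-δ equation on a star graph with `N` edges lies
on the Nehari manifold: `N·(∫φ'² + ω∫φ² − ∫φ^{p+1}) + α·φ(0)² = 0`. -/
theorem ground_state_nehari_identity (p : ℝ) (hp : 1 < p) (N : ℕ) (hN : 2 ≤ N)
    (α ω : ℝ) (hω : α ^ 2 / (N : ℝ) ^ 2 < ω)
    (φ : ℝ → ℝ)
    (hφ : φ = fun x : ℝ => ((p + 1) * ω / 2 *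
      (1 / Real.cosh ((p - 1) * Real.sqrt ω / 2 * x
        - arctanh (α / ((N : ℝ) * Real.sqrt ω)))) ^ 2) ^ (1 / (p - 1))) :
    (N : ℝ) * ((∫ x in Set.Ioi (0 : ℝ), (deriv φ x) ^ 2)
        + ω * (∫ x in Set.Ioi (0 : ℝ), (φ x) ^ 2)
        - (∫ x in Set.Ioi (0 : ℝ), φ x ^ (p + 1)))
      + α * (φ 0) ^ 2 = 0 := by
  have hN0 : (0 : ℝ) < N := by exact_mod_cast (by omega : 0 < N)
  have hω0 : 0 < ω := (by positivity : 0 ≤ α ^ 2 / (N : ℝ) ^ 2).trans_lt hω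
  set t := α / (N * √ω) with ht_def
  have ht : t ∈ Ioo (-1) 1 := by
    rw [mem_Ioo, ← abs_lt, ← sq_lt_one_iff_abs_lt_one, div_pow, mul_pow, sq_sqrt hω0.le,
      div_lt_one (by positivity), ← div_lt_iff₀' (by positivity)]
    exact hω
  obtain rfl : φ = solitonProfile p ω (arctanh t) := hφ
  have hderiv : deriv (solitonProfile p ω (arctanh t)) = solitonProfileDeriv p ω (arctanh t) :=
    funext fun x => (hasDerivAt_solitonProfile hp hω0 x).deriv
  have hderiv0 : solitonProfileDeriv p ω (arctanh t) 0
      = α / N * solitonProfile p ω (arctanh t) 0 := by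
    rw [solitonProfileDeriv, mul_zero, zero_sub, tanh_neg, tanh_arctanh ht, ht_def]
    field_simp
  rw [hderiv, solitonProfile_nehari hp hω0 0, hderiv0]
  field_simp
  ring
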